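/- arXiv:1710.00287 — 2 statements merged into one kernel-verified Lean document; each statement's English description precedes it below -/
import Mathlib

section
/- Let V be a finite set, V' ⊆ V, with values s_i ∈ [0,1] and nonnegative integers c_i for i ∈ V' satisfying ∑_{i∈V'} c_i s_i ≥ t and ∑_{i∈V'} s_i ≤ k for an integer k. Then the sum of the k largest values c_i over i ∈ V' is at least t. -/
/-!
Let `m` be the largest `c j` outside `T`, so that `c i ≥ m` on `T`. The fractional mass
`∑ s j` outside `T` is at most the unused capacity `∑_{i ∈ T} (1 - s i)` on `T`, so moving it
onto `T` at rate `m` shows `∑_{V' \ T} c j s j ≤ ∑_{i ∈ T} c i (1 - s i)`, i.e.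
`∑_{V'} c s ≤ ∑_T c`.
-/

open Finset

theorem sum_mul_le_sum_mul_one_sub_of_threshold {ι : Type*} {A B : Finset ι} {c s : ι → ℝ}
    {m : ℝ} (hm : 0 ≤ m) (hcB : ∀ j ∈ B, c j ≤ m) (hcA : ∀ i ∈ A, m ≤ c i)
    (hsB : ∀ j ∈ B, 0 ≤ s j) (hsA : ∀ i ∈ A, s i ≤ 1)
    (hmass : ∑ j ∈ B, s j ≤ ∑ i ∈ A, (1 - s i)) :
    ∑ j ∈ B, c j * s j ≤ ∑ i ∈ A, c i * (1 - s i) :=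
  calc ∑ j ∈ B, c j * s j
      ≤ ∑ j ∈ B, m * s j :=
        sum_le_sum fun j hj => mul_le_mul_of_nonneg_right (hcB j hj) (hsB j hj)
    _ = m * ∑ j ∈ B, s j := (mul_sum _ _ _).symm
    _ ≤ m * ∑ i ∈ A, (1 - s i) := mul_le_mul_of_nonneg_left hmass hm
    _ = ∑ i ∈ A, m * (1 - s i) := mul_sum _ _ _
    _ ≤ ∑ i ∈ A, c i * (1 - s i) :=
      sum_le_sum fun i hi => mul_le_mul_of_nonneg_right (hcA i hi) (sub_nonneg.2 (hsA i hi))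

theorem sum_sdiff_le_sum_one_sub {ι : Type*} [DecidableEq ι] {V' T : Finset ι} {s : ι → ℝ}
    {k : ℕ} (hs : ∀ i ∈ V', s i ≤ 1) (hsum : ∑ i ∈ V', s i ≤ k) (hT : T ⊆ V')
    (hcard : #T = min k #V') :
    ∑ j ∈ V' \ T, s j ≤ ∑ i ∈ T, (1 - s i) := by
  rcases le_total #V' k with hle | hle
  · obtain rfl : T = V' := eq_of_subset_of_card_le hT (by omega)
    rw [Finset.sdiff_self, sum_empty]
    exact sum_nonneg fun i hi => sub_nonneg.2 (hs i hi)
  · have hTk : #T = k := by omega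
    have hsplit := sum_sdiff hT (f := s)
    rw [sum_sub_distrib, sum_const, nsmul_one, hTk]
    linarith

theorem stmt_4_general {V : Type*} [DecidableEq V]
    (V' : Finset V) (s : V → ℝ) (c : V → ℕ)
    (hs : ∀ i ∈ V', 0 ≤ s i ∧ s i ≤ 1)
    (t : ℝ) (k : ℕ)
    (hcov : t ≤ ∑ i ∈ V', (c i : ℝ) * s i)
    (hsum : ∑ i ∈ V', s i ≤ (k : ℝ))
    (T : Finset V) (hT : T ⊆ V')
    (hcard : T.card = min k V'.card)
    (htop : ∀ i ∈ T, ∀ j ∈ V' \ T, c j ≤ c i) :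
    t ≤ ∑ i ∈ T, (c i : ℝ) := by
  have hmove : ∑ j ∈ V' \ T, (c j : ℝ) * s j ≤ ∑ i ∈ T, (c i : ℝ) * (1 - s i) :=
    sum_mul_le_sum_mul_one_sub_of_threshold (m := (((V' \ T).sup c : ℕ) : ℝ))
      (Nat.cast_nonneg _)
      (fun j hj => Nat.cast_le.2 (le_sup hj))
      (fun i hi => Nat.cast_le.2 (Finset.sup_le (htop i hi)))
      (fun j hj => (hs j (sdiff_subset hj)).1) (fun i hi => (hs i (hT hi)).2)
      (sum_sdiff_le_sum_one_sub (fun i hi => (hs i hi).2) hsum hT hcard)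
  calc t ≤ ∑ i ∈ V', (c i : ℝ) * s i := hcov
    _ = ∑ j ∈ V' \ T, (c j : ℝ) * s j + ∑ i ∈ T, (c i : ℝ) * s i := (sum_sdiff hT).symm
    _ ≤ ∑ i ∈ T, (c i : ℝ) * (1 - s i) + ∑ i ∈ T, (c i : ℝ) * s i := by gcongr
    _ = ∑ i ∈ T, (c i : ℝ) := by
      rw [← sum_add_distrib]; simp only [mul_one_sub, sub_add_cancel]

/-- Counting lemma: if ∑_{i∈V'} c_i s_i ≥ t and ∑_{i∈V'} s_i ≤ k with s_i ∈ [0,1],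
then the sum of the k largest values c_i over V' is at least t. -/
theorem stmt_4 {V : Type*} [DecidableEq V]
    (V' : Finset V) (s : V → ℝ) (c : V → ℕ)
    (hs : ∀ i ∈ V', 0 ≤ s i ∧ s i ≤ 1)
    (t : ℝ) (k : ℕ) (hk : 0 < k)
    (hcov : t ≤ ∑ i ∈ V', (c i : ℝ) * s i)
    (hsum : ∑ i ∈ V', s i ≤ (k : ℝ))
    (T : Finset V) (hT : T ⊆ V')
    (hcard : T.card = min k V'.card)
    (htop : ∀ i ∈ T, ∀ j ∈ V' \ T, c j ≤ c i) :
    t ≤ ∑ i ∈ T, (c i : ℝ) :=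
  stmt_4_general V' s c hs t k hcov hsum T hT hcard htop
end

section
/- Let M be a matroid on V with rank function r, let F_1,...,F_m be pairwise disjoint subsets of V, let y ∈ [0,1]^V satisfy the matroid constraints y(U) ≤ r(U) for all U, y(F_j) ≤ 1 for all j, and suppose x_{ij} ≥ 0 satisfy x_{ij} ≤ y_i and the coverage bound ∑_j c_j s_j ≥ t where s_j = ∑_{i∈F_j} x_{ij} and c_j ≥ 1. Then the maximum of f(z) = ∑_j c_j z(F_j) over the integral polytope P' = {z ∈ [0,1]^V : z(U) ≤ r(U) ∀U, z(F_j) ≤ 1 ∀j} is at least t. -/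
open Finset Function

/- The fractional point that takes the value `x v j` on the part `F j` and `0` off all parts
lies below `y`, hence inherits every packing constraint `y` satisfies, and its mass on `F j`
is exactly `s j`; so it is a point of `P'` of objective `∑ j, c j * s j ≥ t`. -/

section Partwise

variable {V ι M : Type*} [Fintype ι] [DecidableEq V] [AddCommMonoid M]

def partwise (F : ι → Finset V) (x : V → ι → M) (v : V) : M :=
  ∑ j, if v ∈ F j then x v j else 0

variable {F : ι → Finset V} {x : V → ι → M}

theorem partwise_apply_of_mem (hF : Pairwise (Disjoint on F)) {v : V} {j : ι} (hv : v ∈ F j) :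
    partwise F x v = x v j := by
  rw [partwise, sum_eq_single j (fun k _ hkj => if_neg fun hvk =>
    disjoint_left.mp (hF hkj) hvk hv) (by simp), if_pos hv]

theorem partwise_apply_of_forall_notMem {v : V} (hv : ∀ j, v ∉ F j) : partwise F x v = 0 :=
  sum_eq_zero fun j _ => if_neg (hv j)

theorem sum_partwise (hF : Pairwise (Disjoint on F)) (j : ι) :
    ∑ v ∈ F j, partwise F x v = ∑ v ∈ F j, x v j :=
  sum_congr rfl fun _ hv => partwise_apply_of_mem hF hv

theorem partwise_le [Preorder M] (hF : Pairwise (Disjoint on F)) {y : V → M}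
    (hxy : ∀ v j, x v j ≤ y v) (hy : ∀ v, 0 ≤ y v) (v : V) : partwise F x v ≤ y v := by
  by_cases hv : ∃ j, v ∈ F j
  · obtain ⟨j, hvj⟩ := hv
    exact (partwise_apply_of_mem hF hvj).trans_le (hxy v j)
  · exact (partwise_apply_of_forall_notMem (not_exists.mp hv)).trans_le (hy v)

theorem partwise_nonneg [PartialOrder M] [IsOrderedAddMonoid M] (hx : ∀ v j, 0 ≤ x v j)
    (v : V) : 0 ≤ partwise F x v :=
  sum_nonneg fun j _ => by split_ifs <;> simp [hx v j]

end Partwise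

theorem stmt_16_general {V : Type*} [Fintype V]
    (r : Finset V → ℕ)
    (m : ℕ) (F : Fin m → Finset V)
    (hdisj : ∀ i j : Fin m, i ≠ j → Disjoint (F i) (F j))
    (y : V → ℝ) (hy01 : ∀ i, 0 ≤ y i ∧ y i ≤ 1)
    (hyr : ∀ U : Finset V, ∑ v ∈ U, y v ≤ (r U : ℝ))
    (hyF : ∀ j : Fin m, ∑ v ∈ F j, y v ≤ 1)
    (x : V → Fin m → ℝ)
    (hx0 : ∀ i j, 0 ≤ x i j) (hxy : ∀ i j, x i j ≤ y i)
    (c : Fin m → ℝ)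
    (s : Fin m → ℝ) (hs : ∀ j, s j = ∑ i ∈ F j, x i j)
    (t : ℝ) (ht : t ≤ ∑ j, c j * s j)
    (P' : Set (V → ℝ))
    (hP' : P' = {z | (∀ i, 0 ≤ z i ∧ z i ≤ 1) ∧
        (∀ U : Finset V, ∑ v ∈ U, z v ≤ (r U : ℝ)) ∧
        ∀ j : Fin m, ∑ v ∈ F j, z v ≤ 1}) :
    ∃ z ∈ P', t ≤ ∑ j, c j * ∑ v ∈ F j, z v := by
  classical
  have hF : Pairwise (Disjoint on F) := fun i j => hdisj i j
  have hzy := partwise_le hF hxy fun v => (hy01 v).1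
  refine ⟨partwise F x, ?_, ?_⟩
  · rw [hP']
    exact ⟨fun v => ⟨partwise_nonneg hx0 v, (hzy v).trans (hy01 v).2⟩,
      fun U => (sum_le_sum fun v _ => hzy v).trans (hyr U),
      fun j => (sum_le_sum fun v _ => hzy v).trans (hyF j)⟩
  · simpa only [sum_partwise hF, ← hs] using ht

/-- The maximum of f(z) = ∑_j c_j z(F_j) over the matroid-intersection polytope P'
is at least t, given a fractional solution achieving coverage t. -/
theorem stmt_16 {V : Type*} [Fintype V] [DecidableEq V]
    (r : Finset V → ℕ)
    (hr0 : r ∅ = 0)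
    (hrcard : ∀ S : Finset V, r S ≤ S.card)
    (hrmono : ∀ S T : Finset V, S ⊆ T → r S ≤ r T)
    (hrsub : ∀ S T : Finset V, r (S ∪ T) + r (S ∩ T) ≤ r S + r T)
    (m : ℕ) (F : Fin m → Finset V)
    (hdisj : ∀ i j : Fin m, i ≠ j → Disjoint (F i) (F j))
    (y : V → ℝ) (hy01 : ∀ i, 0 ≤ y i ∧ y i ≤ 1)
    (hyr : ∀ U : Finset V, ∑ v ∈ U, y v ≤ (r U : ℝ))
    (hyF : ∀ j : Fin m, ∑ v ∈ F j, y v ≤ 1)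
    (x : V → Fin m → ℝ)
    (hx0 : ∀ i j, 0 ≤ x i j) (hxy : ∀ i j, x i j ≤ y i)
    (c : Fin m → ℝ) (hc : ∀ j, 1 ≤ c j)
    (s : Fin m → ℝ) (hs : ∀ j, s j = ∑ i ∈ F j, x i j)
    (t : ℝ) (ht : t ≤ ∑ j, c j * s j)
    (P' : Set (V → ℝ))
    (hP' : P' = {z | (∀ i, 0 ≤ z i ∧ z i ≤ 1) ∧
        (∀ U : Finset V, ∑ v ∈ U, z v ≤ (r U : ℝ)) ∧
        ∀ j : Fin m, ∑ v ∈ F j, z v ≤ 1}) :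
    ∃ z ∈ P', t ≤ ∑ j, c j * ∑ v ∈ F j, z v :=
  stmt_16_general r m F hdisj y hy01 hyr hyF x hx0 hxy c s hs t ht P' hP'
end
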